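/- Let G be a finite multigraph with a two-edge-connected subgraph H with vertex set W. If π is a partition of the vertex set of G such that the quotient G^π is a cactus, then the quotient H^{π|_W} of H by the restriction of π to W is also a cactus. -/

import Mathlib

set_option autoImplicit false

/-! ## Multigraphs -/

/-- A multigraph: a vertex type `V`, an edge type `E`, and an assignment to each edge of
its unordered pair of endpoints.  Loops and parallel edges are allowed. -/
structure Multigraph (V E : Type) where
  ends : E → Sym2 V

namespace Multigraph

variable {V E : Type}

/-- `G.ReachAvoid F u v` : `v` can be reached from `u` by a walk using no edge of `F`. -/
inductive ReachAvoid (G : Multigraph V E) (F : Set E) : V → V → Prop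
  | refl (v : V) : ReachAvoid G F v v
  | tail {u v w : V} (e : E) (he : e ∉ F) (hvw : G.ends e = s(v, w))
      (h : ReachAvoid G F u v) : ReachAvoid G F u w

/-- A multigraph is connected if any two vertices are joined by a walk. -/
def Connected (G : Multigraph V E) : Prop := ∀ u v : V, G.ReachAvoid ∅ u v

/-- `F` is a set of edges whose deletion disconnects `v` from `w`. -/
def IsEdgeCut (G : Multigraph V E) (v w : V) (F : Set E) : Prop := ¬ G.ReachAvoid F v w

/-- Edge connectivity `λ(v, w)`: the minimum number of edges whose deletion
disconnects `v` from `w`. -/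
noncomputable def edgeConn (G : Multigraph V E) (v w : V) : ℕ :=
  sInf {k : ℕ | ∃ F : Finset E, F.card = k ∧ G.IsEdgeCut v w ↑F}

/-- Walks in a multigraph, recorded together with the edges they traverse. -/
inductive Walk (G : Multigraph V E) : V → V → Type
  | nil (v : V) : Walk G v v
  | cons {u v w : V} (e : E) (huv : G.ends e = s(u, v)) (p : Walk G v w) : Walk G u w

namespace Walk

variable {G : Multigraph V E}

/-- The list of edges traversed by a walk. -/
def edges : ∀ {u v : V}, G.Walk u v → List E
  | _, _, .nil _ => []
  | _, _, .cons e _ p => e :: edges p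

/-- The list of vertices visited by a walk (including both endpoints). -/
def verts : ∀ {u v : V}, G.Walk u v → List V
  | _, v, .nil _ => [v]
  | u, _, .cons _ _ p => u :: verts p

/-- A walk is a path if it visits no vertex twice. -/
def IsPath {u v : V} (p : G.Walk u v) : Prop := p.verts.Nodup

end Walk

/-- `S` is the edge set of a simple cycle of `G`: a nonempty closed walk with no repeated
edges and no repeated vertices (other than the final return to the starting point).
A loop is a simple cycle of length one. -/
def IsSimpleCycleOn [DecidableEq E] (G : Multigraph V E) (S : Finset E) : Prop :=
  ∃ (v : V) (p : G.Walk v v),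
    p.edges ≠ [] ∧ p.edges.Nodup ∧ p.verts.dropLast.Nodup ∧ p.edges.toFinset = S

/-- A cactus: a connected multigraph in which every edge lies on exactly one simple cycle
(simple cycles being identified with their edge sets). -/
def IsCactus [DecidableEq E] (G : Multigraph V E) : Prop :=
  G.Connected ∧ ∀ e : E, ∃! S : Finset E, G.IsSimpleCycleOn S ∧ e ∈ S

/-- Two-edge-connected: connected, and still connected after deleting any single edge. -/
def TwoEdgeConnected (G : Multigraph V E) : Prop :=
  G.Connected ∧ ∀ (e : E) (u v : V), G.ReachAvoid {e} u v

/-- The quotient multigraph by a partition (setoid) of the vertices: the vertices are the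
blocks, and each edge joins the blocks of its original endpoints. -/
def quot (G : Multigraph V E) (σ : Setoid V) : Multigraph (Quotient σ) E :=
  ⟨fun e => (G.ends e).map (Quotient.mk σ)⟩

/-- Degree of a vertex: the number of edge-incidences at it (loops count twice). -/
def degree [DecidableEq V] [Fintype E] (G : Multigraph V E) (v : V) : ℕ :=
  ∑ e : E,
    Sym2.lift
      ⟨fun a b => (if a = v then 1 else 0) + (if b = v then 1 else 0),
        fun _ _ => add_comm _ _⟩ (G.ends e)

/-- A leaf is a vertex of degree one. -/
def IsLeaf [DecidableEq V] [Fintype E] (G : Multigraph V E) (v : V) : Prop :=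
  G.degree v = 1

/-- A tree: a connected multigraph with no simple cycles. -/
def IsTree [DecidableEq E] (G : Multigraph V E) : Prop :=
  G.Connected ∧ ∀ S : Finset E, ¬ G.IsSimpleCycleOn S

end Multigraph

/-- An embedding of the multigraph `H` into `G`, realizing `H` as a subgraph of `G`. -/
structure Multigraph.Embedding {W F V E : Type} (H : Multigraph W F) (G : Multigraph V E) where
  vmap : W → V
  emap : F → E
  vmap_inj : Function.Injective vmap
  emap_inj : Function.Injective emap
  ends_map : ∀ f : F, G.ends (emap f) = (H.ends f).map vmap

/-! ## Multidigraphs -/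

/-- A multidigraph: vertex type `V`, edge type `E`, and source and target maps. -/
structure Multidigraph (V E : Type) where
  src : E → V
  tgt : E → V

namespace Multidigraph

variable {V E : Type}

/-- The underlying multigraph of a multidigraph. -/
def toMultigraph (D : Multidigraph V E) : Multigraph V E :=
  ⟨fun e => s(D.src e, D.tgt e)⟩

/-- Directed walks in a multidigraph. -/
inductive DiWalk (D : Multidigraph V E) : V → V → Type
  | nil (v : V) : DiWalk D v v
  | cons {u v w : V} (e : E) (hs : D.src e = u) (ht : D.tgt e = v)
      (p : DiWalk D v w) : DiWalk D u w

namespace DiWalk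

variable {D : Multidigraph V E}

/-- The list of edges traversed by a directed walk. -/
def edges : ∀ {u v : V}, D.DiWalk u v → List E
  | _, _, .nil _ => []
  | _, _, .cons e _ _ p => e :: edges p

/-- The list of vertices visited by a directed walk. -/
def verts : ∀ {u v : V}, D.DiWalk u v → List V
  | _, v, .nil _ => [v]
  | u, _, .cons _ _ _ p => u :: verts p

end DiWalk

/-- `S` is the edge set of a simple directed cycle of `D`. -/
def IsDiCycleOn [DecidableEq E] (D : Multidigraph V E) (S : Finset E) : Prop :=
  ∃ (v : V) (p : D.DiWalk v v),
    p.edges ≠ [] ∧ p.edges.Nodup ∧ p.verts.dropLast.Nodup ∧ p.edges.toFinset = S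

/-- An oriented cactus: the underlying multigraph is a cactus and each of its simple
cycles (pads) is a directed cycle. -/
def IsOrientedCactus [DecidableEq E] (D : Multidigraph V E) : Prop :=
  D.toMultigraph.IsCactus ∧
    ∀ S : Finset E, D.toMultigraph.IsSimpleCycleOn S → D.IsDiCycleOn S

/-- The quotient multidigraph by a partition (setoid) of the vertices. -/
def quot (D : Multidigraph V E) (σ : Setoid V) : Multidigraph (Quotient σ) E where
  src := fun e => Quotient.mk σ (D.src e)
  tgt := fun e => Quotient.mk σ (D.tgt e)

/-- Indegree of a vertex: the number of edges with target `v`. -/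
def indeg [DecidableEq V] [Fintype E] (D : Multidigraph V E) (v : V) : ℕ :=
  (Finset.univ.filter fun e => D.tgt e = v).card

/-- Outdegree of a vertex: the number of edges with source `v`. -/
def outdeg [DecidableEq V] [Fintype E] (D : Multidigraph V E) (v : V) : ℕ :=
  (Finset.univ.filter fun e => D.src e = v).card

end Multidigraph

/-- An embedding of the multidigraph `H` into `G`, realizing `H` as a subgraph of `G`. -/
structure Multidigraph.Embedding {W F V E : Type}
    (H : Multidigraph W F) (G : Multidigraph V E) where
  vmap : W → V
  emap : F → E
  vmap_inj : Function.Injective vmap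
  emap_inj : Function.Injective emap
  src_map : ∀ f : F, G.src (emap f) = vmap (H.src f)
  tgt_map : ∀ f : F, G.tgt (emap f) = vmap (H.tgt f)

/-! ## Cycle graphs and non-crossing partitions -/

/-- The cycle graph of length `n`: vertices `Fin n`, edges `Fin n`, edge `i` joining
`v i` and `v (i+1)` (indices mod `n`). -/
def cycleGraph (n : ℕ) [NeZero n] : Multigraph (Fin n) (Fin n) :=
  ⟨fun i => s(i, i + 1)⟩

/-- The cycle graph of length `n` in which each edge carries an orientation:
edge `i` is oriented counterclockwise (from `v i` to `v (i+1)`) if `orient i = true`,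
and clockwise otherwise. -/
def cycleDigraph (n : ℕ) [NeZero n] (orient : Fin n → Bool) : Multidigraph (Fin n) (Fin n) where
  src := fun i => if orient i then i else i + 1
  tgt := fun i => if orient i then i + 1 else i

/-- A relation (e.g. a partition) on `Fin m` is non-crossing if there are no indices
`i₁ < i₂ < i₃ < i₄` with `i₁, i₃` in one block and `i₂, i₄` in a different block. -/
def NonCrossingRel {m : ℕ} (r : Fin m → Fin m → Prop) : Prop :=
  ¬ ∃ i₁ i₂ i₃ i₄ : Fin m, i₁ < i₂ ∧ i₂ < i₃ ∧ i₃ < i₄ ∧ r i₁ i₃ ∧ r i₂ i₄ ∧ ¬ r i₁ i₂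

/-- The union of a partition `σ` of the vertices `v₁, …, vₙ` (at the even positions) and
a partition `κ` of the edges `e₁, …, eₙ` (at the odd positions) of a cycle, as a relation
on the `2n` interlaced points `v₁, e₁, v₂, e₂, …, vₙ, eₙ`. -/
def interRel {n : ℕ} (σ κ : Setoid (Fin n)) (x y : Fin (2 * n)) : Prop :=
  (x.val % 2 = 0 ∧ y.val % 2 = 0 ∧
    σ.r ⟨x.val / 2, by have := x.isLt; omega⟩ ⟨y.val / 2, by have := y.isLt; omega⟩) ∨
  (x.val % 2 = 1 ∧ y.val % 2 = 1 ∧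
    κ.r ⟨x.val / 2, by have := x.isLt; omega⟩ ⟨y.val / 2, by have := y.isLt; omega⟩)

/-- `κ` is the Kreweras complement of `σ`: the largest partition of the edges such that
the union `σ ∪ κ` is non-crossing with respect to the interlaced (cyclic) order. -/
def IsKrewerasComplement {n : ℕ} (σ κ : Setoid (Fin n)) : Prop :=
  NonCrossingRel (interRel σ κ) ∧
    ∀ κ' : Setoid (Fin n), NonCrossingRel (interRel σ κ') → κ' ≤ κ

open Classical in
/-- The block of the partition `κ` containing `i`, as a finite set. -/
noncomputable def setoidClass {n : ℕ} (κ : Setoid (Fin n)) (i : Fin n) : Finset (Fin n) :=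
  Finset.univ.filter fun j => κ.r i j

open Fin.NatCast in
/-- `j` is the next element of `B` encountered strictly after `i` in the cyclic order of
`Fin n` (if `B = {i}` then `j = i` itself, one full turn later). -/
def CyclicNextIn {n : ℕ} [NeZero n] (B : Finset (Fin n)) (i j : Fin n) : Prop :=
  i ∈ B ∧ j ∈ B ∧ ∃ d : ℕ, 0 < d ∧ d ≤ n ∧ j = i + (d : Fin n) ∧
    ∀ d' : ℕ, 0 < d' → d' < d → i + (d' : Fin n) ∉ B

/-! ## Wedges of two (di)graphs at their roots -/

/-- The canonical map from the vertices of `t'` into the wedge vertex type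
`V ⊕ {x : V' // x ≠ ρ'}`, sending the root `ρ'` to (the image of) `ρ`. -/
def wedgeJ {V V' : Type} [DecidableEq V'] (ρ : V) (ρ' : V') :
    V' → V ⊕ {x : V' // x ≠ ρ'} :=
  fun x => if h : x = ρ' then Sum.inl ρ else Sum.inr ⟨x, h⟩

/-- The wedge of two multigraphs `t`, `t'` obtained by identifying `ρ ∈ t` with `ρ' ∈ t'`. -/
def Multigraph.wedge {V E V' E' : Type} [DecidableEq V']
    (t : Multigraph V E) (t' : Multigraph V' E') (ρ : V) (ρ' : V') :
    Multigraph (V ⊕ {x : V' // x ≠ ρ'}) (E ⊕ E') :=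
  ⟨fun e =>
    match e with
    | Sum.inl e => (t.ends e).map Sum.inl
    | Sum.inr e => (t'.ends e).map (wedgeJ ρ ρ')⟩

/-- The wedge of two multidigraphs `t`, `t'` obtained by identifying `ρ ∈ t` with `ρ' ∈ t'`. -/
def Multidigraph.wedge {V E V' E' : Type} [DecidableEq V']
    (t : Multidigraph V E) (t' : Multidigraph V' E') (ρ : V) (ρ' : V') :
    Multidigraph (V ⊕ {x : V' // x ≠ ρ'}) (E ⊕ E') where
  src := fun e =>
    match e with
    | Sum.inl e => Sum.inl (t.src e)
    | Sum.inr e => wedgeJ ρ ρ' (t'.src e)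
  tgt := fun e =>
    match e with
    | Sum.inl e => Sum.inl (t.tgt e)
    | Sum.inr e => wedgeJ ρ ρ' (t'.tgt e)

/-! ## Flowers (a cycle with graphs attached) and stars (trees wedged at a common root) -/

/-- The canonical map from the vertices of the `i`-th attached graph into the flower,
sending the basepoint `b i` to the cycle vertex `i`. -/
def flowerJ {n : ℕ} {W : Fin n → Type} [∀ i, DecidableEq (W i)]
    (b : ∀ i, W i) (i : Fin n) :
    W i → Fin n ⊕ (Σ i, {x : W i // x ≠ b i}) :=
  fun x => if h : x = b i then Sum.inl i else Sum.inr ⟨i, x, h⟩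

/-- The flower: a cycle of length `n` with the multigraph `d i` attached at the cycle
vertex `i` via its basepoint `b i`; the attached graphs are disjoint except through the
cycle, and `d i` meets the cycle exactly in the vertex `i`. -/
def flowerGraph {n : ℕ} [NeZero n] {W F : Fin n → Type} [∀ i, DecidableEq (W i)]
    (d : ∀ i, Multigraph (W i) (F i)) (b : ∀ i, W i) :
    Multigraph (Fin n ⊕ (Σ i, {x : W i // x ≠ b i})) (Fin n ⊕ (Σ i, F i)) :=
  ⟨fun e =>
    match e with
    | Sum.inl k => s(Sum.inl k, Sum.inl (k + 1))
    | Sum.inr ⟨i, f⟩ => ((d i).ends f).map (flowerJ b i)⟩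

/-- The canonical map from the vertices of the `i`-th tree into the star, sending the
root `r i` to the common amalgamated root. -/
def starJ {n : ℕ} {W : Fin n → Type} [∀ i, DecidableEq (W i)]
    (r : ∀ i, W i) (i : Fin n) :
    W i → Unit ⊕ (Σ i, {x : W i // x ≠ r i}) :=
  fun x => if h : x = r i then Sum.inl () else Sum.inr ⟨i, x, h⟩

/-- The star: the disjoint union of the multigraphs `t i` with all the roots `r i`
identified to a single vertex. -/
def starGraph {n : ℕ} {W F : Fin n → Type} [∀ i, DecidableEq (W i)]
    (t : ∀ i, Multigraph (W i) (F i)) (r : ∀ i, W i) :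
    Multigraph (Unit ⊕ (Σ i, {x : W i // x ≠ r i})) (Σ i, F i) :=
  ⟨fun e => ((t e.1).ends e.2).map (starJ r e.1)⟩

/-! ## Graphs of matrices -/

/-- The partition of `V` identifying the input `vin` with the output `vout` (and nothing
else). -/
def rootSetoid {V : Type} (vin vout : V) : Setoid V where
  r a b := a = b ∨ ((a = vin ∨ a = vout) ∧ (b = vin ∨ b = vout))
  iseqv := by
    constructor
    · intro x; exact Or.inl rfl
    · rintro x y (rfl | ⟨hx, hy⟩)
      · exact Or.inl rfl
      · exact Or.inr ⟨hy, hx⟩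
    · rintro x y z (rfl | ⟨hx, hy⟩) (rfl | ⟨hy', hz⟩)
      · exact Or.inl rfl
      · exact Or.inr ⟨hy', hz⟩
      · exact Or.inr ⟨hx, hy⟩
      · exact Or.inr ⟨hx, hz⟩

/-- The graph of matrices `Z_g(A₁, …, A_K)` associated to a bi-rooted multidigraph `g`
with input `vin`, output `vout` and edge ordering `o`. -/
noncomputable def graphOfMatrices {V E : Type} [Fintype V] [Fintype E] [DecidableEq V] {K N : ℕ}
    (g : Multidigraph V E) (vin vout : V) (o : E ≃ Fin K)
    (A : Fin K → Matrix (Fin N) (Fin N) ℂ) : Matrix (Fin N) (Fin N) ℂ :=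
  Matrix.of fun i j =>
    ∑ φ : V → Fin N,
      if φ vout = i ∧ φ vin = j then ∏ e : E, A (o e) (φ (g.tgt e)) (φ (g.src e)) else 0

/-! ## Set partitions as finite set systems -/

/-- `P` is a partition of the (finite) type `V`: its blocks are nonempty and every
element of `V` lies in exactly one block. -/
def IsPartitionOf (V : Type) [DecidableEq V] (P : Finset (Finset V)) : Prop :=
  (∀ B ∈ P, B.Nonempty) ∧ ∀ v : V, ∃! B, B ∈ P ∧ v ∈ B

/-- The block of the partition `P` containing `v`. -/
def blockOf {V : Type} [DecidableEq V] (P : Finset (Finset V)) (hP : IsPartitionOf V P)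
    (v : V) : {B : Finset V // B ∈ P} :=
  ⟨Finset.choose (fun B => v ∈ B) P (hP.2 v),
    Finset.choose_mem (fun B => v ∈ B) P (hP.2 v)⟩

/-! The quotient `H^{π|_W}` is again two-edge-connected, so each of its edges lies on some
simple cycle. It embeds into `G^π`, since two vertices of `W` are identified by `π|_W`
exactly when they are identified by `π`; simple cycles map injectively to simple cycles
under an embedding, so uniqueness of the cycle through an edge is inherited from `G^π`. -/

namespace Multigraph

variable {V E : Type} {G : Multigraph V E}

namespace Walk

def append : ∀ {u v w : V}, G.Walk u v → G.Walk v w → G.Walk u w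
  | _, _, _, .nil _, q => q
  | _, _, _, .cons e h p, q => .cons e h (p.append q)

lemma edges_append : ∀ {u v w : V} (p : G.Walk u v) (q : G.Walk v w),
    (p.append q).edges = p.edges ++ q.edges
  | _, _, _, .nil _, _ => rfl
  | _, _, _, .cons e _ p, q => congrArg (e :: ·) (edges_append p q)

lemma start_mem_verts : ∀ {u v : V} (p : G.Walk u v), u ∈ p.verts
  | _, _, .nil v => List.mem_singleton_self v
  | _, _, .cons _ _ _ => List.mem_cons_self

lemma exists_verts_eq_concat : ∀ {u v : V} (p : G.Walk u v), ∃ l, p.verts = l ++ [v]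
  | _, _, .nil v => ⟨[], rfl⟩
  | u, _, .cons _ _ p => by
      obtain ⟨l, hl⟩ := exists_verts_eq_concat p
      exact ⟨u :: l, by rw [verts, hl, List.cons_append]⟩

lemma mem_verts_of_mem_edges {u v : V} (p : G.Walk u v) {e : E} (he : e ∈ p.edges)
    {x : V} (hx : x ∈ G.ends e) : x ∈ p.verts := by
  induction p with
  | nil v => simp [edges] at he
  | cons e' h p ih =>
    rcases List.mem_cons.1 he with rfl | he
    · rcases Sym2.mem_iff.1 (h ▸ hx) with rfl | rfl
      · exact List.mem_cons_self
      · exact List.mem_cons_of_mem _ (start_mem_verts p)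
    · exact List.mem_cons_of_mem _ (ih he)

lemma IsPath.edges_nodup {u v : V} {p : G.Walk u v} (hp : p.IsPath) : p.edges.Nodup := by
  induction p with
  | nil v => exact List.nodup_nil
  | cons e h p ih =>
    rw [IsPath, verts, List.nodup_cons] at hp
    refine List.nodup_cons.2 ⟨fun he => hp.1 ?_, ih hp.2⟩
    exact mem_verts_of_mem_edges p he (h ▸ Sym2.mem_mk_left _ _)

lemma exists_suffix_of_mem_verts {u v : V} (p : G.Walk u v) {w : V} (hw : w ∈ p.verts) :
    ∃ q : G.Walk w v, q.verts <:+ p.verts ∧ q.edges ⊆ p.edges := by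
  induction p with
  | nil v =>
    obtain rfl := List.mem_singleton.1 hw
    exact ⟨.nil w, List.suffix_refl _, List.Subset.refl _⟩
  | cons e h p ih =>
    by_cases hw' : w ∈ p.verts
    · obtain ⟨q, hsuf, hsub⟩ := ih hw'
      exact ⟨q, hsuf.trans (List.suffix_cons _ _),
        List.Subset.trans hsub (List.subset_cons_self _ _)⟩
    · obtain rfl := (List.mem_cons.1 hw).resolve_right hw'
      exact ⟨.cons e h p, List.suffix_refl _, List.Subset.refl _⟩

lemma exists_isPath_subset : ∀ {u v : V} (p : G.Walk u v),
    ∃ q : G.Walk u v, q.IsPath ∧ q.edges ⊆ p.edges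
  | _, _, .nil v => ⟨.nil v, List.nodup_singleton v, List.Subset.refl _⟩
  | u, _, .cons e h p => by
    obtain ⟨q, hq, hsub⟩ := exists_isPath_subset p
    by_cases hu : u ∈ q.verts
    · -- `u` is revisited: shortcut to the part of `q` after `u`
      obtain ⟨q', hsuf, hsub'⟩ := exists_suffix_of_mem_verts q hu
      exact ⟨q', hq.sublist hsuf.sublist,
        List.Subset.trans (List.Subset.trans hsub' hsub) (List.subset_cons_self _ _)⟩
    · exact ⟨.cons e h q, List.nodup_cons.2 ⟨hu, hq⟩, List.cons_subset_cons _ hsub⟩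

end Walk

lemma ReachAvoid.exists_walk {F : Set E} {u v : V} (h : G.ReachAvoid F u v) :
    ∃ p : G.Walk u v, ∀ e ∈ p.edges, e ∉ F := by
  induction h with
  | refl => exact ⟨.nil _, fun _ he => absurd he List.not_mem_nil⟩
  | tail e he hvw _ ih =>
    obtain ⟨p, hp⟩ := ih
    refine ⟨p.append (.cons e hvw (.nil _)), fun e' he' => ?_⟩
    rcases List.mem_append.1 (Walk.edges_append p _ ▸ he') with he' | he'
    · exact hp e' he'
    · obtain rfl := List.mem_singleton.1 he'
      exact he

lemma exists_isSimpleCycleOn_of_reachAvoid [DecidableEq E] {f : E} {a b : V}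
    (hf : G.ends f = s(a, b)) (h : G.ReachAvoid {f} b a) :
    ∃ S : Finset E, G.IsSimpleCycleOn S ∧ f ∈ S := by
  obtain ⟨p₀, hp₀⟩ := h.exists_walk
  obtain ⟨p, hp, hsub⟩ := p₀.exists_isPath_subset
  have hfp : f ∉ p.edges := fun hf' => hp₀ f (hsub hf') rfl
  obtain ⟨l, hl⟩ := p.exists_verts_eq_concat
  have hal : (a :: l).Nodup := by
    rw [Walk.IsPath, hl, List.nodup_append] at hp
    exact List.nodup_cons.2 ⟨fun ha => hp.2.2 a ha a (List.mem_singleton_self a) rfl, hp.1⟩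
  have hdrop : (Walk.cons f hf p).verts.dropLast = a :: l := by
    rw [Walk.verts, hl, ← List.cons_append, List.dropLast_concat]
  exact ⟨_, ⟨a, .cons f hf p, List.cons_ne_nil _ _,
    List.nodup_cons.2 ⟨hfp, hp.edges_nodup⟩, hdrop ▸ hal, rfl⟩,
    List.mem_toFinset.2 List.mem_cons_self⟩

lemma TwoEdgeConnected.exists_isSimpleCycleOn [DecidableEq E] (h : G.TwoEdgeConnected)
    (f : E) : ∃ S : Finset E, G.IsSimpleCycleOn S ∧ f ∈ S := by
  induction hf : G.ends f using Sym2.ind with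
  | h a b => exact exists_isSimpleCycleOn_of_reachAvoid hf (h.2 f b a)

@[simp]
lemma quot_ends (σ : Setoid V) (e : E) : (G.quot σ).ends e = (G.ends e).map (Quotient.mk σ) :=
  rfl

lemma ReachAvoid.quot (σ : Setoid V) {F : Set E} {u v : V} (h : G.ReachAvoid F u v) :
    (G.quot σ).ReachAvoid F ⟦u⟧ ⟦v⟧ := by
  induction h with
  | refl => exact .refl _
  | tail e he hvw _ ih => exact .tail e he (by rw [quot_ends, hvw, Sym2.map_mk]) ih

lemma TwoEdgeConnected.quot (h : G.TwoEdgeConnected) (σ : Setoid V) :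
    (G.quot σ).TwoEdgeConnected :=
  ⟨fun x y => Quotient.inductionOn₂ x y fun u v => (h.1 u v).quot σ,
    fun e x y => Quotient.inductionOn₂ x y fun u v => (h.2 e u v).quot σ⟩

variable {W F : Type} {H : Multigraph W F}

def Walk.map (φ : H.Embedding G) : ∀ {u v : W}, H.Walk u v → G.Walk (φ.vmap u) (φ.vmap v)
  | _, _, .nil v => .nil (φ.vmap v)
  | _, _, .cons f h p => .cons (φ.emap f) (by rw [φ.ends_map, h, Sym2.map_mk]) (p.map φ)

lemma Walk.edges_map (φ : H.Embedding G) : ∀ {u v : W} (p : H.Walk u v),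
    (p.map φ).edges = p.edges.map φ.emap
  | _, _, .nil _ => rfl
  | _, _, .cons f _ p => congrArg (φ.emap f :: ·) (edges_map φ p)

lemma Walk.verts_map (φ : H.Embedding G) : ∀ {u v : W} (p : H.Walk u v),
    (p.map φ).verts = p.verts.map φ.vmap
  | _, _, .nil _ => rfl
  | u, _, .cons _ _ p => congrArg (φ.vmap u :: ·) (verts_map φ p)

namespace Embedding

lemma isSimpleCycleOn_image [DecidableEq E] [DecidableEq F] (φ : H.Embedding G)
    {S : Finset F} (hS : H.IsSimpleCycleOn S) : G.IsSimpleCycleOn (S.image φ.emap) := by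
  obtain ⟨v, p, hne, hnd, hdl, rfl⟩ := hS
  refine ⟨φ.vmap v, p.map φ, ?_, ?_, ?_, ?_⟩
  · simpa [Walk.edges_map] using hne
  · exact Walk.edges_map φ p ▸ hnd.map φ.emap_inj
  · rw [Walk.verts_map, ← List.map_dropLast]
    exact hdl.map φ.vmap_inj
  · ext e
    simp [Walk.edges_map]

def quot (φ : H.Embedding G) (σ : Setoid V) :
    (H.quot (σ.comap φ.vmap)).Embedding (G.quot σ) where
  vmap := Quotient.map φ.vmap fun _ _ h => h
  emap := φ.emap
  vmap_inj x y := Quotient.inductionOn₂ x y fun a b h =>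
    Quotient.sound (@Quotient.exact _ σ _ _ h)
  emap_inj := φ.emap_inj
  ends_map f := by
    rw [quot_ends, quot_ends, φ.ends_map, Sym2.map_map, Sym2.map_map]
    rfl

end Embedding

lemma TwoEdgeConnected.isCactus_of_embedding [DecidableEq E] [DecidableEq F]
    (hH : H.TwoEdgeConnected) (φ : H.Embedding G) (hG : G.IsCactus) : H.IsCactus := by
  refine ⟨hH.1, fun f => ?_⟩
  obtain ⟨S, hS, hfS⟩ := hH.exists_isSimpleCycleOn f
  refine ⟨S, ⟨hS, hfS⟩, fun T ⟨hT, hfT⟩ => Finset.image_injective φ.emap_inj ?_⟩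
  exact (hG.2 (φ.emap f)).unique ⟨φ.isSimpleCycleOn_image hT, Finset.mem_image_of_mem _ hfT⟩
    ⟨φ.isSimpleCycleOn_image hS, Finset.mem_image_of_mem _ hfS⟩

end Multigraph

/-- If `H` is a two-edge-connected subgraph of `G` and `π` is a partition
of the vertices of `G` whose quotient `G^π` is a cactus, then the quotient `H^{π|_W}` of
`H` by the restriction of `π` is also a cactus. -/
theorem stmt_6 {V E W F : Type} [DecidableEq E] [DecidableEq F]
    (G : Multigraph V E) (H : Multigraph W F) (emb : H.Embedding G)
    (htec : H.TwoEdgeConnected) (σ : Setoid V)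
    (hcactus : (G.quot σ).IsCactus) :
    (H.quot (σ.comap emb.vmap)).IsCactus :=
  (htec.quot _).isCactus_of_embedding (emb.quot σ) hcactus
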